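/- arXiv:1904.04008 — 3 statements merged into one kernel-verified Lean document; each statement's English description precedes it below -/
import Mathlib

section
/- Let n ≥ 1, α ∈ (0,n), p ∈ (1,∞) with αp > n, and let p' = p/(p-1). For any measurable set Ω ⊆ ℝⁿ with finite volume |Ω| and any x ∈ ℝⁿ, one has ∫_Ω |x−y|^{(α−n)p'} dy ≤ (n(p−1)/(αp−n)) · (ω_{n−1}/n)^{(n−α)p'/n} · |Ω|^{((α−n)p'+n)/n}, where ω_{n−1} is the surface area of the unit sphere in ℝⁿ. -/
open MeasureTheory Real Set

/-- upper bound for ∫_Ω |x−y|^{(α−n)p'} dy on a finite-volume set Ω. -/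
theorem stmt0 (n : ℕ) (hn : 1 ≤ n) (α p p' : ℝ)
    (hα : α ∈ Set.Ioo (0:ℝ) (n:ℝ)) (hp : 1 < p) (hαp : (n:ℝ) < α * p)
    (hp' : p' = p / (p - 1))
    (ω : ℝ) (hω : ω = 2 * π ^ ((n:ℝ)/2) / Real.Gamma ((n:ℝ)/2))
    (Ω : Set (EuclideanSpace ℝ (Fin n))) (hΩm : MeasurableSet Ω)
    (hΩ : volume Ω < ⊤) (x : EuclideanSpace ℝ (Fin n)) :
    ∫ y in Ω, ‖x - y‖ ^ ((α - n) * p') ≤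
      ((n : ℝ) * (p - 1) / (α * p - n)) * (ω / n) ^ ((n - α) * p' / n) *
        (volume Ω).toReal ^ (((α - n) * p' + n) / n) := by
  haveI : Nonempty (Fin n) := ⟨⟨0, hn⟩⟩
  obtain ⟨hα0, hαn⟩ := hα
  have hn0 : (0:ℝ) < n := hα0.trans hαn
  have hnne : (n:ℝ) ≠ 0 := hn0.ne'
  have hp1 : (0:ℝ) < p - 1 := by linarith
  have hp'pos : 0 < p' := by rw [hp']; positivity
  set β : ℝ := (α - n) * p' with hβdef
  have hβneg : β < 0 := mul_neg_of_neg_of_pos (by linarith) hp'pos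
  have hαpn : (0:ℝ) < α * p - n := by linarith
  have hβn_eq : β + n = (α * p - n) / (p - 1) := by
    rw [hβdef, hp']; field_simp; ring
  have hβn : (0:ℝ) < β + n := by rw [hβn_eq]; positivity
  have hβne : β ≠ 0 := ne_of_lt hβneg
  -- the constant c = ω/n = volume of the unit ball
  set c : ℝ := Real.sqrt π ^ n / Real.Gamma ((n:ℝ) / 2 + 1) with hcdef
  have hΓ : 0 < Real.Gamma ((n:ℝ)/2) := Real.Gamma_pos_of_pos (by positivity)
  have hc : 0 < c := by
    apply div_pos (pow_pos (Real.sqrt_pos.mpr Real.pi_pos) n)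
    exact Real.Gamma_pos_of_pos (by positivity)
  have hcω : c = ω / n := by
    rw [hcdef, hω]
    have h1 : Real.sqrt π ^ n = π ^ ((n:ℝ)/2) := by
      rw [Real.sqrt_eq_rpow, ← Real.rpow_natCast (π ^ ((1:ℝ)/2)) n,
        ← Real.rpow_mul Real.pi_pos.le]
      ring_nf
    have h2 : Real.Gamma ((n:ℝ) / 2 + 1) = ((n:ℝ)/2) * Real.Gamma ((n:ℝ)/2) :=
      Real.Gamma_add_one (by positivity)
    rw [h1, h2]
    field_simp
  rw [← hcω]
  have hball : ∀ r : ℝ, 0 ≤ r →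
      volume (Metric.ball x r) = ENNReal.ofReal (c * r ^ n) := by
    intro r hr
    rw [EuclideanSpace.volume_ball, Fintype.card_fin, ← ENNReal.ofReal_pow hr,
      ← ENNReal.ofReal_mul (by positivity), hcdef, mul_comm]
  -- trivial case : measure zero
  rcases eq_or_ne (volume Ω) 0 with hΩ0 | hΩ0
  · rw [setIntegral_measure_zero _ hΩ0]
    have hV : (volume Ω).toReal = 0 := by rw [hΩ0]; simp
    rw [hV, Real.zero_rpow (ne_of_gt (div_pos hβn hn0)), mul_zero]
  -- main case
  have hΩfin : volume Ω ≠ ⊤ := hΩ.ne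
  set V : ℝ := (volume Ω).toReal with hVdef
  have hVpos : 0 < V := ENNReal.toReal_pos hΩ0 hΩfin
  have hΩV : volume Ω = ENNReal.ofReal V := (ENNReal.ofReal_toReal hΩfin).symm
  set R : ℝ := (V / c) ^ ((1:ℝ)/n) with hRdef
  have hVc0 : 0 < V / c := div_pos hVpos hc
  have hRpos : 0 < R := Real.rpow_pos_of_pos hVc0 _
  have hRn : R ^ (n:ℝ) = V / c := by
    rw [hRdef, ← Real.rpow_mul hVc0.le]
    rw [show ((1:ℝ)/n) * n = 1 by field_simp, Real.rpow_one]
  set T : ℝ := R ^ β with hTdef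
  have hTpos : 0 < T := Real.rpow_pos_of_pos hRpos _
  set γ : ℝ := (n:ℝ) / β with hγdef
  have hγ : γ < -1 := by
    rw [hγdef, div_lt_iff_of_neg hβneg]; linarith
  have hγ1 : γ + 1 < 0 := by linarith
  have hγ1ne : γ + 1 ≠ 0 := ne_of_lt hγ1
  -- measurability and nonnegativity of the integrand
  have hgm : Measurable fun y : EuclideanSpace ℝ (Fin n) => ‖x - y‖ ^ β :=
    ((measurable_const.sub measurable_id).norm).pow measurable_const
  have hg0 : ∀ y : EuclideanSpace ℝ (Fin n), 0 ≤ ‖x - y‖ ^ β :=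
    fun y => Real.rpow_nonneg (norm_nonneg _) _
  -- the RHS is nonnegative
  have hRHS0 : 0 ≤ (n:ℝ) * (p - 1) / (α * p - n) * c ^ (((n:ℝ) - α) * p' / n) *
      V ^ ((β + n) / n) := by
    apply mul_nonneg (mul_nonneg _ _) (Real.rpow_nonneg hVpos.le _)
    · apply div_nonneg (by positivity) hαpn.le
    · exact Real.rpow_nonneg hc.le _
  -- rewrite the integral as a lower Lebesgue integral
  rw [integral_eq_lintegral_of_nonneg_ae (Filter.Eventually.of_forall hg0)
    hgm.aestronglyMeasurable]
  apply ENNReal.toReal_le_of_le_ofReal hRHS0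
  rw [lintegral_eq_lintegral_meas_lt _ (Filter.Eventually.of_forall hg0) hgm.aemeasurable]
  -- the key real identity
  have hVcR : V = c * R ^ (n:ℝ) := by rw [hRn]; field_simp
  have e1 : V * T = c * R ^ ((n:ℝ) + β) := by
    rw [hVcR, hTdef, Real.rpow_add hRpos]; ring
  have e2 : T ^ (γ + 1) = R ^ ((n:ℝ) + β) := by
    rw [hTdef, ← Real.rpow_mul hRpos.le]
    congr 1
    rw [hγdef, mul_add, mul_one, mul_comm β ((n:ℝ)/β), div_mul_cancel₀ _ hβne]
  have e3a : γ / (γ + 1) = (n:ℝ) / (β + n) := by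
    rw [div_eq_div_iff hγ1ne (ne_of_gt hβn), hγdef]
    field_simp
    exact add_comm _ _
  have e3b : (n:ℝ) / (β + n) = (n:ℝ) * (p - 1) / (α * p - n) := by
    rw [hβn_eq, div_div_eq_mul_div]
  have e4 : c * R ^ ((n:ℝ) + β) = c ^ (((n:ℝ) - α) * p' / n) * V ^ ((β + n) / n) := by
    have hexp : ((n:ℝ) - α) * p' / n = -β / n := by rw [hβdef]; ring
    have hs : c ^ (-β/(n:ℝ)) = c ^ ((1:ℝ) - (β + n)/n) := by
      congr 1; field_simp; ring
    calc c * R ^ ((n:ℝ) + β)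
        = c * ((V/c) ^ ((β + n)/(n:ℝ))) := by
          rw [hRdef, ← Real.rpow_mul hVc0.le]
          congr 2; field_simp; ring
      _ = c * (V ^ ((β + n)/(n:ℝ)) / c ^ ((β + n)/(n:ℝ))) := by
          rw [Real.div_rpow hVpos.le hc.le]
      _ = c ^ ((1:ℝ) - (β + n)/n) * V ^ ((β + n)/(n:ℝ)) := by
          rw [Real.rpow_sub hc, Real.rpow_one]; ring
      _ = c ^ (((n:ℝ) - α) * p' / n) * V ^ ((β + n) / n) := by rw [hexp, hs]
  have key : V * T + c * (-T ^ (γ + 1) / (γ + 1)) =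
      (n:ℝ) * (p - 1) / (α * p - n) * c ^ (((n:ℝ) - α) * p' / n) * V ^ ((β + n) / n) := by
    have h1 : V * T + c * (-T ^ (γ + 1) / (γ + 1)) =
        (c * R ^ ((n:ℝ) + β)) * (γ / (γ + 1)) := by
      rw [e1, e2]; field_simp; ring
    rw [h1, e3a, e3b, e4]; ring
  -- split the outer integral at T and bound each piece
  have hsplit : Ioc (0:ℝ) T ∪ Ioi T = Ioi 0 := Ioc_union_Ioi_eq_Ioi hTpos.le
  have hnn2 : 0 ≤ c * (-T ^ (γ + 1) / (γ + 1)) := by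
    apply mul_nonneg hc.le
    apply le_of_lt (div_pos_of_neg_of_neg _ hγ1)
    simpa using (Real.rpow_pos_of_pos hTpos (γ+1))
  have hint : Integrable (fun t : ℝ => c * t ^ γ) ((volume : Measure ℝ).restrict (Ioi T)) :=
    (integrableOn_Ioi_rpow_of_lt hγ hTpos).const_mul c
  have hnnae : 0 ≤ᵐ[(volume : Measure ℝ).restrict (Ioi T)] fun t : ℝ => c * t ^ γ := by
    filter_upwards [ae_restrict_mem measurableSet_Ioi] with t ht
    exact mul_nonneg hc.le (Real.rpow_nonneg (le_of_lt (hTpos.trans ht)) _)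
  have h2 : ∫⁻ t in Ioi T, (volume.restrict Ω) {y | t < ‖x - y‖ ^ β} ≤
      ∫⁻ t in Ioi T, ENNReal.ofReal (c * t ^ γ) := by
    refine lintegral_mono_ae ?_
    filter_upwards [ae_restrict_mem measurableSet_Ioi] with t ht
    have ht0 : (0:ℝ) < t := hTpos.trans ht
    have hsub : {y : EuclideanSpace ℝ (Fin n) | t < ‖x - y‖ ^ β} ⊆
        Metric.ball x (t ^ ((1:ℝ)/β)) := by
      intro y hy
      simp only [mem_setOf_eq] at hy
      have hy0 : (0:ℝ) < ‖x - y‖ := by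
        rcases (norm_nonneg (x - y)).lt_or_eq with h | h
        · exact h
        · exfalso; rw [← h, Real.zero_rpow hβne] at hy; linarith
      have h1 : (‖x - y‖ ^ β) ^ ((1:ℝ)/β) < t ^ ((1:ℝ)/β) :=
        Real.rpow_lt_rpow_of_neg ht0 hy (div_neg_of_pos_of_neg one_pos hβneg)
      rw [← Real.rpow_mul (norm_nonneg _), mul_one_div, div_self hβne,
        Real.rpow_one] at h1
      rw [Metric.mem_ball, dist_eq_norm, norm_sub_rev]
      exact h1
    have hpow : (t ^ ((1:ℝ)/β)) ^ n = t ^ γ := by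
      rw [← Real.rpow_natCast (t ^ ((1:ℝ)/β)) n, ← Real.rpow_mul ht0.le, hγdef]
      congr 1; ring
    calc (volume.restrict Ω) {y | t < ‖x - y‖ ^ β}
        ≤ (volume.restrict Ω) (Metric.ball x (t ^ ((1:ℝ)/β))) := measure_mono hsub
      _ ≤ volume (Metric.ball x (t ^ ((1:ℝ)/β))) := Measure.restrict_apply_le _ _
      _ = ENNReal.ofReal (c * (t ^ ((1:ℝ)/β)) ^ n) :=
          hball _ (Real.rpow_nonneg ht0.le _)
      _ = ENNReal.ofReal (c * t ^ γ) := by rw [hpow]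
  have h1 : ∫⁻ t in Ioc (0:ℝ) T, (volume.restrict Ω) {y | t < ‖x - y‖ ^ β} ≤
      ∫⁻ _t in Ioc (0:ℝ) T, volume Ω :=
    lintegral_mono fun t => le_trans (measure_mono (subset_univ _))
      (le_of_eq (by rw [Measure.restrict_apply_univ]))
  have hA : ∫⁻ _t in Ioc (0:ℝ) T, volume Ω = ENNReal.ofReal V * ENNReal.ofReal T := by
    rw [setLIntegral_const, Real.volume_Ioc, sub_zero, hΩV, mul_comm]
  have hB : ∫⁻ t in Ioi T, ENNReal.ofReal (c * t ^ γ) =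
      ENNReal.ofReal (c * (-T ^ (γ + 1) / (γ + 1))) := by
    rw [← MeasureTheory.ofReal_integral_eq_lintegral_ofReal hint hnnae]
    congr 1
    rw [MeasureTheory.integral_const_mul, integral_Ioi_rpow_of_lt hγ hTpos]
  calc ∫⁻ t in Ioi (0:ℝ), (volume.restrict Ω) {y | t < ‖x - y‖ ^ β}
      = (∫⁻ t in Ioc (0:ℝ) T, (volume.restrict Ω) {y | t < ‖x - y‖ ^ β}) +
        ∫⁻ t in Ioi T, (volume.restrict Ω) {y | t < ‖x - y‖ ^ β} := by
        rw [← hsplit, lintegral_union measurableSet_Ioi (Ioc_disjoint_Ioi le_rfl)]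
    _ ≤ (∫⁻ _t in Ioc (0:ℝ) T, volume Ω) +
        ∫⁻ t in Ioi T, ENNReal.ofReal (c * t ^ γ) := add_le_add h1 h2
    _ = ENNReal.ofReal (V * T + c * (-T ^ (γ + 1) / (γ + 1))) := by
        rw [hA, hB, ← ENNReal.ofReal_mul hVpos.le,
          ← ENNReal.ofReal_add (by positivity) hnn2]
    _ = ENNReal.ofReal ((n:ℝ) * (p - 1) / (α * p - n) * c ^ (((n:ℝ) - α) * p' / n) *
          V ^ ((β + n) / n)) := by rw [key]
end

section
/- Let n ≥ 1, s ∈ (0,1), and p ∈ (1, n/(n−s)]. If μ is a nonnegative Radon measure on ℝⁿ such that the function x ↦ I_s μ(x) = ∫_{ℝⁿ} |x−y|^{s−n} dμ(y) belongs to L^p(ℝⁿ), then μ = 0. -/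
open MeasureTheory Real Set
open Metric

/-- if `1 < p ≤ n/(n−s)` and the Riesz potential `I_s μ` of a nonnegative
Radon measure `μ` is in `L^p(ℝⁿ)`, then `μ = 0`. -/
theorem stmt6 (n : ℕ) (hn : 1 ≤ n) (s p : ℝ) (hs : s ∈ Set.Ioo (0:ℝ) 1)
    (hp : 1 < p) (hpn : p ≤ (n:ℝ) / ((n:ℝ) - s))
    (μ : Measure (EuclideanSpace ℝ (Fin n))) [μ.Regular]
    (hI : ∫⁻ x, (∫⁻ y, ENNReal.ofReal (‖x - y‖ ^ (s - (n:ℝ))) ∂μ) ^ p < ⊤) :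
    μ = 0 := by
  by_contra hμ
  have h1n : (1:ℝ) ≤ (n:ℝ) := by exact_mod_cast hn
  have hns : 0 < (n:ℝ) - s := by linarith [hs.2]
  have hp0 : (0:ℝ) ≤ p := by linarith
  -- find a ball of positive measure
  obtain ⟨k₀, hk₀⟩ : ∃ k : ℕ, μ (closedBall 0 (k:ℝ)) ≠ 0 := by
    by_contra h
    push_neg at h
    apply hμ
    rw [← Measure.measure_univ_eq_zero]
    have hU : (Set.univ : Set (EuclideanSpace ℝ (Fin n)))
        = ⋃ k : ℕ, closedBall 0 (k:ℝ) := by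
      ext x
      simp only [mem_univ, mem_iUnion, mem_closedBall_zero_iff, true_iff]
      exact ⟨⌈‖x‖⌉₊, Nat.le_ceil _⟩
    rw [hU]
    exact measure_iUnion_null h
  set T : ℝ := max (k₀:ℝ) 1 with hTdef
  have hT1 : 1 ≤ T := le_max_right _ _
  have hT0 : 0 < T := lt_of_lt_of_le one_pos hT1
  set m := μ (closedBall (0 : EuclideanSpace ℝ (Fin n)) T) with hmdef
  have hm0 : m ≠ 0 := fun h => hk₀ (measure_mono_null
    (closedBall_subset_closedBall (le_max_left _ _)) h)
  have hmtop : m ≠ ⊤ := measure_closedBall_lt_top.ne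
  set a : ℝ := (s - (n:ℝ)) * p with hadef
  have hsn : s - (n:ℝ) < 0 := by linarith
  have ha : a < 0 := mul_neg_of_neg_of_pos hsn (by linarith)
  have hna : 0 ≤ (n:ℝ) + a := by
    have := (le_div_iff₀ hns).mp hpn
    nlinarith
  -- pointwise lower bound for the Riesz potential outside the ball
  have key : ∀ x : EuclideanSpace ℝ (Fin n), x ∉ closedBall (0:EuclideanSpace ℝ (Fin n)) T →
      m * ENNReal.ofReal ((‖x‖ + T) ^ (s - (n:ℝ)))
        ≤ ∫⁻ y, ENNReal.ofReal (‖x - y‖ ^ (s - (n:ℝ))) ∂μ := by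
    intro x hx
    rw [mem_closedBall_zero_iff, not_le] at hx
    have hmeas : Measurable fun y : EuclideanSpace ℝ (Fin n) =>
        ENNReal.ofReal (‖x - y‖ ^ (s - (n:ℝ))) := by
      fun_prop
    calc m * ENNReal.ofReal ((‖x‖ + T) ^ (s - (n:ℝ)))
        = ∫⁻ _ in closedBall (0:EuclideanSpace ℝ (Fin n)) T,
            ENNReal.ofReal ((‖x‖ + T) ^ (s - (n:ℝ))) ∂μ := by
          rw [setLIntegral_const, mul_comm]
      _ ≤ ∫⁻ y in closedBall (0:EuclideanSpace ℝ (Fin n)) T,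
            ENNReal.ofReal (‖x - y‖ ^ (s - (n:ℝ))) ∂μ := by
          refine setLIntegral_mono hmeas fun y hy => ?_
          rw [mem_closedBall_zero_iff] at hy
          refine ENNReal.ofReal_le_ofReal ?_
          refine rpow_le_rpow_of_nonpos ?_ ?_ hsn.le
          · have : ‖x‖ - ‖y‖ ≤ ‖x - y‖ := norm_sub_norm_le x y
            have : 0 < ‖x‖ - ‖y‖ := by linarith [hy.trans_lt hx]
            linarith [norm_sub_norm_le x y]
          · calc ‖x - y‖ ≤ ‖x‖ + ‖y‖ := norm_sub_le x y
              _ ≤ ‖x‖ + T := by linarith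
      _ ≤ ∫⁻ y, ENNReal.ofReal (‖x - y‖ ^ (s - (n:ℝ))) ∂μ :=
          setLIntegral_le_lintegral _ _
  -- finiteness of J
  set f : EuclideanSpace ℝ (Fin n) → ENNReal := fun x => ENNReal.ofReal ((‖x‖ + T) ^ a)
    with hfdef
  have hfmeas : Measurable f := by fun_prop
  set J := ∫⁻ x in (closedBall (0:EuclideanSpace ℝ (Fin n)) T)ᶜ, f x with hJdef
  have hJfin : J < ⊤ := by
    have hstep : m ^ p * J ≤ ∫⁻ x,
        (∫⁻ y, ENNReal.ofReal (‖x - y‖ ^ (s - (n:ℝ))) ∂μ) ^ p := by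
      have heq : m ^ p * J = ∫⁻ x in (closedBall (0:EuclideanSpace ℝ (Fin n)) T)ᶜ,
          (m * ENNReal.ofReal ((‖x‖ + T) ^ (s - (n:ℝ)))) ^ p := by
        rw [hJdef, ← lintegral_const_mul _ hfmeas]
        refine lintegral_congr fun x => ?_
        rw [ENNReal.mul_rpow_of_nonneg _ _ hp0,
          ENNReal.ofReal_rpow_of_nonneg (rpow_nonneg (by positivity) _) hp0,
          ← Real.rpow_mul (by positivity : (0:ℝ) ≤ ‖x‖ + T)]
      rw [heq]
      calc _ ≤ ∫⁻ x in (closedBall (0:EuclideanSpace ℝ (Fin n)) T)ᶜ,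
            (∫⁻ y, ENNReal.ofReal (‖x - y‖ ^ (s - (n:ℝ))) ∂μ) ^ p := by
            refine lintegral_mono_ae ?_
            filter_upwards [ae_restrict_mem measurableSet_closedBall.compl] with x hx
            exact ENNReal.rpow_le_rpow (key x hx) hp0
        _ ≤ _ := setLIntegral_le_lintegral _ _
    have hmp0 : m ^ p ≠ 0 := by
      simp only [ne_eq, ENNReal.rpow_eq_zero_iff, not_or, not_and, not_lt]
      exact ⟨fun h => absurd h hm0, fun h => absurd h hmtop⟩
    by_contra h
    push_neg at h
    rw [top_le_iff.mp h, ENNReal.mul_top hmp0] at hstep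
    exact absurd (top_le_iff.mp hstep) hI.ne
  -- divergence of J
  set v1 := volume (ball (0:EuclideanSpace ℝ (Fin n)) 1) with hv1def
  have hv10 : v1 ≠ 0 := (measure_ball_pos _ _ one_pos).ne'
  have h2n : (1:ℝ) < 2 ^ n := by
    calc (1:ℝ) < 2 := one_lt_two
      _ = 2 ^ 1 := (pow_one 2).symm
      _ ≤ 2 ^ n := by exact pow_le_pow_right₀ one_le_two hn
  set c : ℝ := (4:ℝ) ^ a * ((2:ℝ) ^ n - 1) with hcdef
  have hc0 : 0 < c := mul_pos (rpow_pos_of_pos (by norm_num) _) (by linarith)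
  set A : ℕ → Set (EuclideanSpace ℝ (Fin n)) := fun k =>
    closedBall 0 (2^(k+1) * T) \ closedBall 0 (2^k * T) with hAdef
  have h2k : ∀ k : ℕ, (1:ℝ) ≤ 2^k := fun k => one_le_pow₀ one_le_two
  have hone_le : ∀ k : ℕ, (1:ℝ) ≤ 2^k * T := by
    intro k; nlinarith [h2k k]
  have hAmeas : ∀ k, MeasurableSet (A k) := fun k =>
    measurableSet_closedBall.diff measurableSet_closedBall
  have hAsub : ∀ k, A k ⊆ (closedBall (0:EuclideanSpace ℝ (Fin n)) T)ᶜ := by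
    intro k x hx hx'
    apply hx.2
    rw [mem_closedBall_zero_iff] at hx' ⊢
    calc ‖x‖ ≤ T := hx'
      _ ≤ 2^k * T := le_mul_of_one_le_left hT0.le (h2k k)
  have hmono : ∀ i j : ℕ, i ≤ j → (2:ℝ)^i * T ≤ 2^j * T := by
    intro i j hij
    have : (2:ℝ)^i ≤ 2^j := pow_le_pow_right₀ one_le_two hij
    nlinarith
  have hAdisj : Pairwise (Function.onFun Disjoint A) := by
    have key2 : ∀ i j : ℕ, i < j → Disjoint (A i) (A j) := by
      intro i j hij
      rw [Set.disjoint_left]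
      rintro x ⟨hx1, -⟩ ⟨-, hx2⟩
      apply hx2
      rw [mem_closedBall_zero_iff] at hx1 ⊢
      exact hx1.trans (hmono _ _ hij)
    intro i j hij
    rcases hij.lt_or_gt with h|h
    · exact key2 _ _ h
    · exact (key2 _ _ h).symm
  have hterm : ∀ k : ℕ, ENNReal.ofReal c * v1 ≤ ∫⁻ x in A k, f x := by
    intro k
    have hu0 : (0:ℝ) < 2^k * T := lt_of_lt_of_le one_pos (hone_le k)
    have hvol : volume (A k) = ENNReal.ofReal ((2^(k+1)*T)^n - (2^k*T)^n) * v1 := by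
      rw [hAdef]
      rw [measure_diff (closedBall_subset_closedBall (hmono k (k+1) (Nat.le_succ k)))
        measurableSet_closedBall.nullMeasurableSet measure_closedBall_lt_top.ne,
        Measure.addHaar_closedBall _ _ (by positivity), Measure.addHaar_closedBall _ _ hu0.le,
        finrank_euclideanSpace_fin,
        ← ENNReal.sub_mul (fun _ _ => measure_ball_lt_top.ne),
        ← ENNReal.ofReal_sub _ (by positivity)]
    have hcore : c ≤ (2^(k+2)*T)^a * ((2^(k+1)*T)^n - (2^k*T)^n) := by
      set u : ℝ := 2^k * T with hudef
      have h4 : (2:ℝ)^(k+2)*T = 4*u := by rw [hudef]; ring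
      have h2 : (2:ℝ)^(k+1)*T = 2*u := by rw [hudef]; ring
      rw [h4, h2, mul_pow, Real.mul_rpow (by norm_num) hu0.le]
      have hre : (2:ℝ)^n * u^n - u^n = (2^n - 1) * u^n := by ring
      rw [hre]
      have huan : (1:ℝ) ≤ u^a * u^(n:ℕ) := by
        have : u^a * u^(n:ℕ) = u^(a + (n:ℝ)) := by
          rw [← Real.rpow_natCast u n, ← Real.rpow_add hu0]
        rw [this]
        calc (1:ℝ) = 1 ^ (a+(n:ℝ)) := (one_rpow _).symm
          _ ≤ u ^ (a+(n:ℝ)) := Real.rpow_le_rpow zero_le_one (hone_le k) (by linarith)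
      calc c = (4:ℝ)^a * ((2^n - 1) * 1) := by rw [hcdef]; ring
        _ ≤ (4:ℝ)^a * ((2^n - 1) * (u^a * u^(n:ℕ))) := by
            refine mul_le_mul_of_nonneg_left ?_ (rpow_nonneg (by norm_num) _)
            exact mul_le_mul_of_nonneg_left huan (by linarith)
        _ = 4^a * u^a * ((2^n-1)*u^(n:ℕ)) := by ring
    calc ENNReal.ofReal c * v1
        ≤ ENNReal.ofReal ((2^(k+2)*T)^a * ((2^(k+1)*T)^n - (2^k*T)^n)) * v1 := by
          gcongr
      _ = ENNReal.ofReal ((2^(k+2)*T)^a) * volume (A k) := by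
          rw [hvol, ENNReal.ofReal_mul (by positivity), mul_assoc]
      _ = ∫⁻ _ in A k, ENNReal.ofReal ((2^(k+2)*T)^a) := by
          rw [setLIntegral_const]
      _ ≤ ∫⁻ x in A k, f x := by
          refine setLIntegral_mono hfmeas fun x hx => ?_
          obtain ⟨hx1, hx2⟩ := hx
          rw [mem_closedBall_zero_iff] at hx1
          refine ENNReal.ofReal_le_ofReal (rpow_le_rpow_of_nonpos (by positivity) ?_ ha.le)
          have hT2 : T ≤ 2^(k+1)*T := le_mul_of_one_le_left hT0.le (h2k (k+1))
          have h22 : (2:ℝ)^(k+2)*T = 2^(k+1)*T + 2^(k+1)*T := by ring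
          linarith
  have htop : (⊤:ENNReal) ≤ J := by
    calc (⊤:ENNReal) = ∑' _ : ℕ, ENNReal.ofReal c * v1 :=
        (ENNReal.tsum_const_eq_top_of_ne_zero
          (mul_ne_zero (ENNReal.ofReal_pos.mpr hc0).ne' hv10)).symm
      _ ≤ ∑' k : ℕ, ∫⁻ x in A k, f x := ENNReal.tsum_le_tsum hterm
      _ = ∫⁻ x in ⋃ k, A k, f x := (lintegral_iUnion hAmeas hAdisj f).symm
      _ ≤ J := lintegral_mono_set (Set.iUnion_subset hAsub)
  exact absurd (top_le_iff.mp htop) hJfin.ne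
end

section
/- Let n ≥ 1, s ∈ (0,1), p ∈ (1,∞) with sp > n, x₀ ∈ ℝⁿ, r₀ > 0, β = −(n−s)/(p−1), and u_β(x) = (β+1)^{−1} |x−x₀|^{β+1} 1_{B(x₀,r₀)}(x). Then ∇u_β(x) = |x−x₀|^β · (x−x₀)/|x−x₀| · 1_{B(x₀,r₀)}(x) almost everywhere, ‖|∇u_β|‖_{L^p} = (ω_{n−1}/n)^{1/p}(n/(βp+n))^{1/p} r₀^{β+n/p}, and κ_{−s} ∫_{|h|<r₀} |h|^{β+s−n} dh = κ_{−s} (ω_{n−1}/(β+s)) r₀^{β+s}, where κ_{−s} = Γ((n−s+1)/2)/(2^s π^{n/2} Γ((1+s)/2)). -/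
open MeasureTheory Real Set

section helpers

lemma radial_int (n : ℕ) (hn : 1 ≤ n) (t r₀ : ℝ) (ht : 0 < t + n) (hr₀ : 0 < r₀) :
    ∫ x in Metric.ball (0 : EuclideanSpace ℝ (Fin n)) r₀, ‖x‖ ^ t =
      (n * (volume (Metric.ball (0 : EuclideanSpace ℝ (Fin n)) 1)).toReal) *
        (r₀ ^ (t + n) / (t + n)) := by
  haveI : Nontrivial (EuclideanSpace ℝ (Fin n)) := by
    exact Module.nontrivial_of_finrank_pos (R := ℝ)
      (by rw [finrank_euclideanSpace_fin]; exact hn)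
  have hdim : Module.finrank ℝ (EuclideanSpace ℝ (Fin n)) = n := finrank_euclideanSpace_fin
  have key := MeasureTheory.integral_fun_norm_addHaar
      (volume : Measure (EuclideanSpace ℝ (Fin n)))
      (Set.indicator (Set.Iio r₀) (fun y : ℝ => y ^ t))
  rw [hdim] at key
  have lhs_eq : (∫ x : EuclideanSpace ℝ (Fin n),
      Set.indicator (Set.Iio r₀) (fun y : ℝ => y ^ t) ‖x‖) =
      ∫ x in Metric.ball (0 : EuclideanSpace ℝ (Fin n)) r₀, ‖x‖ ^ t := by
    rw [← MeasureTheory.integral_indicator measurableSet_ball]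
    congr 1
    ext x
    simp [Set.indicator_apply, Metric.mem_ball, dist_zero_right]
    split <;> simp_all
  have rhs_eq : (∫ y in Set.Ioi (0:ℝ),
      y ^ (n - 1) • Set.indicator (Set.Iio r₀) (fun y : ℝ => y ^ t) y) =
      r₀ ^ (t + n) / (t + n) := by
    have e1 : (fun y : ℝ => y ^ (n - 1) • Set.indicator (Set.Iio r₀) (fun y : ℝ => y ^ t) y) =
        Set.indicator (Set.Iio r₀) (fun y : ℝ => y ^ (n - 1) • y ^ t) := by
      ext y
      by_cases h : y ∈ Set.Iio r₀ <;> simp [Set.indicator_apply, h]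
    rw [e1, MeasureTheory.integral_indicator measurableSet_Iio,
      Measure.restrict_restrict measurableSet_Iio]
    have e2 : Set.Iio r₀ ∩ Set.Ioi (0:ℝ) = Set.Ioo 0 r₀ := by
      ext y; simp [and_comm]
    rw [e2]
    have e3 : ∫ y in Set.Ioo (0:ℝ) r₀, y ^ (n - 1) • y ^ t =
        ∫ y in Set.Ioo (0:ℝ) r₀, y ^ (t + (n - 1 : ℕ)) := by
      apply setIntegral_congr_fun measurableSet_Ioo
      intro y hy
      simp only [smul_eq_mul]
      rw [Real.rpow_add hy.1, Real.rpow_natCast, mul_comm]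
    rw [e3, ← MeasureTheory.integral_Ioc_eq_integral_Ioo,
      ← intervalIntegral.integral_of_le hr₀.le,
      integral_rpow (Or.inl (by
        have hcast : ((n - 1 : ℕ) : ℝ) = (n:ℝ) - 1 := by push_cast [Nat.cast_sub hn]; ring
        rw [hcast]; linarith))]
    have : t + (n - 1 : ℕ) + 1 = t + n := by
      have : (1:ℝ) ≤ (n:ℝ) := by exact_mod_cast hn
      have hcast : ((n - 1 : ℕ) : ℝ) = (n:ℝ) - 1 := by
        push_cast [Nat.cast_sub hn]; ring
      rw [hcast]; ring
    rw [this, Real.zero_rpow ht.ne', sub_zero]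
  rw [lhs_eq, rhs_eq, nsmul_eq_mul, smul_eq_mul] at key
  rw [key]; simp only [measureReal_def]; ring

lemma transl_int (n : ℕ) (t r₀ : ℝ) (x₀ : EuclideanSpace ℝ (Fin n)) :
    ∫ x in Metric.ball x₀ r₀, ‖x - x₀‖ ^ t =
      ∫ x in Metric.ball (0 : EuclideanSpace ℝ (Fin n)) r₀, ‖x‖ ^ t := by
  rw [← MeasureTheory.integral_indicator measurableSet_ball,
    ← MeasureTheory.integral_indicator measurableSet_ball,
    ← MeasureTheory.integral_sub_right_eq_self
      (fun x : EuclideanSpace ℝ (Fin n) =>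
        (Metric.ball (0 : EuclideanSpace ℝ (Fin n)) r₀).indicator (fun y => ‖y‖ ^ t) x) x₀]
  congr 1
  ext x
  by_cases h : x ∈ Metric.ball x₀ r₀
  · rw [Set.indicator_of_mem h, Set.indicator_of_mem (by
      simpa [Metric.mem_ball, dist_eq_norm, dist_zero_right] using h)]
  · rw [Set.indicator_of_notMem h, Set.indicator_of_notMem (by
      simpa [Metric.mem_ball, dist_eq_norm, dist_zero_right] using h)]

lemma grad_part {n : ℕ} (β r₀ : ℝ) (hβ1 : β + 1 ≠ 0)
    (x₀ x : EuclideanSpace ℝ (Fin n))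
    (hx : 0 < ‖x - x₀‖) (hlt : ‖x - x₀‖ < r₀) :
    gradient ((Metric.ball x₀ r₀).indicator
        (fun x => (β + 1)⁻¹ * ‖x - x₀‖ ^ (β + 1))) x
      = (‖x - x₀‖ ^ β / ‖x - x₀‖) • (x - x₀) := by
  set y : EuclideanSpace ℝ (Fin n) := x - x₀ with hy_def
  have hy : y ≠ 0 := norm_pos_iff.mp hx
  have hy2 : (0:ℝ) < ‖y‖ ^ 2 := by have := norm_pos_iff.mpr hy; positivity
  have h1 : HasFDerivAt (fun z : EuclideanSpace ℝ (Fin n) => ‖z - x₀‖ ^ 2) (2 • (innerSL ℝ y)) x := by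
    have h0 := ((hasFDerivAt_id x).sub_const x₀).norm_sq
    simpa only [ContinuousLinearMap.comp_id, id_eq] using h0
  have h2 : HasFDerivAt (fun z : EuclideanSpace ℝ (Fin n) => (‖z - x₀‖ ^ 2) ^ ((β+1)/2))
      ((((β+1)/2) * (‖y‖^2) ^ ((β+1)/2 - 1)) • (2 • innerSL ℝ y)) x :=
    h1.rpow_const (Or.inl hy2.ne')
  have h3 : HasFDerivAt (fun z : EuclideanSpace ℝ (Fin n) => (β+1)⁻¹ * (‖z - x₀‖ ^ 2) ^ ((β+1)/2))
      ((β+1)⁻¹ • ((((β+1)/2) * (‖y‖^2) ^ ((β+1)/2 - 1)) • (2 • innerSL ℝ y))) x :=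
    h2.const_mul _
  have hev : (Metric.ball x₀ r₀).indicator
        (fun x => (β + 1)⁻¹ * ‖x - x₀‖ ^ (β + 1))
      =ᶠ[nhds x] (fun z : EuclideanSpace ℝ (Fin n) => (β+1)⁻¹ * (‖z - x₀‖ ^ 2) ^ ((β+1)/2)) := by
    have hopen : IsOpen (Metric.ball x₀ r₀ ∩ {x₀}ᶜ) :=
      Metric.isOpen_ball.inter isOpen_compl_singleton
    have hmem : x ∈ Metric.ball x₀ r₀ ∩ {x₀}ᶜ := by
      constructor
      · simpa [Metric.mem_ball, dist_eq_norm] using hlt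
      · simp only [Set.mem_compl_iff, Set.mem_singleton_iff]
        intro h; exact hy (by rw [hy_def, h, sub_self])
    filter_upwards [hopen.mem_nhds hmem] with z hz
    rw [Set.indicator_of_mem hz.1]
    have hz0 : (0:ℝ) < ‖z - x₀‖ := by
      rw [norm_pos_iff, sub_ne_zero]
      exact hz.2
    congr 1
    rw [← Real.rpow_natCast ‖z - x₀‖ 2, ← Real.rpow_mul (norm_nonneg _)]
    congr 1
    push_cast
    ring
  have hfd : HasFDerivAt ((Metric.ball x₀ r₀).indicator
        (fun x => (β + 1)⁻¹ * ‖x - x₀‖ ^ (β + 1)))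
      ((β+1)⁻¹ • ((((β+1)/2) * (‖y‖^2) ^ ((β+1)/2 - 1)) • (2 • innerSL ℝ y))) x :=
    h3.congr_of_eventuallyEq hev
  have hgrad := (hasFDerivAt_iff_hasGradientAt.mp hfd).gradient
  have hscal : (‖y‖:ℝ) ^ β / ‖y‖ = (β+1)⁻¹ * (((β+1)/2) * (‖y‖^2) ^ ((β+1)/2 - 1)) * 2 := by
    have h2r : (‖y‖:ℝ) ^ 2 = ‖y‖ ^ (2:ℝ) := by
      rw [← Real.rpow_natCast ‖y‖ 2]; norm_num
    have hnp : (0:ℝ) < ‖y‖ := norm_pos_iff.mpr hy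
    rw [h2r, ← Real.rpow_mul (norm_nonneg _)]
    have : (2:ℝ) * ((β+1)/2 - 1) = β - 1 := by ring
    rw [this, div_eq_mul_inv, ← Real.rpow_neg_one ‖y‖, ← Real.rpow_add hnp]
    field_simp
    ring
  have hT : InnerProductSpace.toDual ℝ (EuclideanSpace ℝ (Fin n)) ((‖y‖ ^ β / ‖y‖) • y) =
      (β+1)⁻¹ • ((((β+1)/2) * (‖y‖^2) ^ ((β+1)/2 - 1)) • (2 • innerSL ℝ y)) := by
    ext w
    simp only [InnerProductSpace.toDual_apply_apply, ContinuousLinearMap.smul_apply,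
      ContinuousLinearMap.coe_smul', Pi.smul_apply, innerSL_apply_apply,
      real_inner_smul_left, smul_eq_mul]
    rw [hscal]
    ring
  rw [hgrad, ← hT, LinearIsometryEquiv.symm_apply_apply]

end helpers

/-- extremal computation for the fractional Morrey–Sobolev inequality:
gradient and `L^p` norm of `u_β(x) = (β+1)⁻¹|x−x₀|^{β+1}1_{B(x₀,r₀)}(x)` with
`β = −(n−s)/(p−1)`, and the explicit value of `κ_{−s}∫_{|h|<r₀}|h|^{β+s−n} dh`. -/
theorem stmt17 (n : ℕ) (hn : 1 ≤ n) (s p β : ℝ)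
    (hs : s ∈ Set.Ioo (0:ℝ) 1) (hp : 1 < p) (hsp : (n:ℝ) < s * p)
    (hβ : β = -((n:ℝ) - s)/(p - 1))
    (ω : ℝ) (hω : ω = 2 * π ^ ((n:ℝ)/2) / Real.Gamma ((n:ℝ)/2))
    (κ : ℝ) (hκ : κ = Real.Gamma (((n:ℝ) - s + 1)/2) /
      (2 ^ s * π ^ ((n:ℝ)/2) * Real.Gamma ((1 + s)/2)))
    (x₀ : EuclideanSpace ℝ (Fin n)) (r₀ : ℝ) (hr₀ : 0 < r₀)
    (u : EuclideanSpace ℝ (Fin n) → ℝ)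
    (hu : u = (Metric.ball x₀ r₀).indicator (fun x => (β + 1)⁻¹ * ‖x - x₀‖ ^ (β + 1))) :
    (∀ x : EuclideanSpace ℝ (Fin n), 0 < ‖x - x₀‖ → ‖x - x₀‖ < r₀ →
      gradient u x = (‖x - x₀‖ ^ β / ‖x - x₀‖) • (x - x₀)) ∧
    (∫ x in Metric.ball x₀ r₀, (‖x - x₀‖ ^ β) ^ p) ^ (1/p) =
      (ω / n) ^ (1/p) * ((n:ℝ)/(β * p + n)) ^ (1/p) * r₀ ^ (β + (n:ℝ)/p) ∧
    κ * ∫ h in Metric.ball (0 : EuclideanSpace ℝ (Fin n)) r₀, ‖h‖ ^ (β + s - n) =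
      κ * (ω / (β + s)) * r₀ ^ (β + s) := by
  obtain ⟨hs0, hs1⟩ := hs
  have hn1 : (1:ℝ) ≤ (n:ℝ) := by exact_mod_cast hn
  have hp1 : (0:ℝ) < p - 1 := by linarith
  have hnum : (0:ℝ) < s * p - n := by linarith
  have hβp : β * p + n = (s * p - n) / (p - 1) := by
    rw [hβ]; field_simp; ring
  have hβs : β + s = (s * p - n) / (p - 1) := by
    rw [hβ]; field_simp; ring
  have hβppos : 0 < β * p + n := by rw [hβp]; positivity
  have hβspos : 0 < β + s := by rw [hβs]; positivity
  have hβ1 : β + 1 ≠ 0 := by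
    rw [hβ]
    intro h
    have h' : (n:ℝ) - s = p - 1 := by
      field_simp at h
      linarith
    nlinarith
  -- ω equals n times the volume of the unit ball
  have hΓpos : 0 < Real.Gamma ((n:ℝ)/2) := Real.Gamma_pos_of_pos (by positivity)
  have hωV : ω = n * (volume (Metric.ball (0 : EuclideanSpace ℝ (Fin n)) 1)).toReal := by
    haveI : Nonempty (Fin n) := ⟨⟨0, hn⟩⟩
    rw [EuclideanSpace.volume_ball]
    simp only [Fintype.card_fin]
    rw [ENNReal.toReal_mul, ENNReal.toReal_pow, ENNReal.toReal_ofReal zero_le_one, one_pow,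
      ENNReal.toReal_ofReal (by positivity), one_mul]
    have hsq : Real.sqrt π ^ n = π ^ ((n:ℝ)/2) := by
      rw [Real.sqrt_eq_rpow, ← Real.rpow_natCast (π ^ ((1:ℝ)/2)) n,
        ← Real.rpow_mul pi_pos.le]
      congr 1
      ring
    have hΓ : Real.Gamma ((n:ℝ)/2 + 1) = ((n:ℝ)/2) * Real.Gamma ((n:ℝ)/2) :=
      Real.Gamma_add_one (by positivity)
    rw [hsq, hΓ, hω]
    field_simp
  have hωpos : 0 < ω := by
    rw [hω]
    positivity
  have hnpos : (0:ℝ) < n := by linarith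
  refine ⟨?_, ?_, ?_⟩
  · intro x hx hlt
    rw [hu]
    exact grad_part β r₀ hβ1 x₀ x hx hlt
  · -- Lᵖ norm computation
    have I2 : (∫ x in Metric.ball x₀ r₀, (‖x - x₀‖ ^ β) ^ p) =
        ω * (r₀ ^ (β * p + n) / (β * p + n)) := by
      have e0 : (∫ x in Metric.ball x₀ r₀, (‖x - x₀‖ ^ β) ^ p) =
          ∫ x in Metric.ball x₀ r₀, ‖x - x₀‖ ^ (β * p) := by
        apply setIntegral_congr_fun measurableSet_ball
        intro x _
        exact (Real.rpow_mul (norm_nonneg _) β p).symm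
      rw [e0, transl_int, radial_int n hn (β * p) r₀ hβppos hr₀, ← hωV]
    rw [I2]
    have e1 : ω * (r₀ ^ (β * p + n) / (β * p + n)) =
        (ω / (β * p + n)) * r₀ ^ (β * p + n) := by ring
    rw [e1, Real.mul_rpow (by positivity) (Real.rpow_nonneg hr₀.le _),
      ← Real.rpow_mul hr₀.le]
    have e2 : (β * p + n) * (1/p) = β + (n:ℝ)/p := by
      field_simp
    rw [e2, ← Real.mul_rpow (by positivity) (by positivity)]
    congr 2
    field_simp
  · -- last integral
    have I3 : (∫ h in Metric.ball (0 : EuclideanSpace ℝ (Fin n)) r₀, ‖h‖ ^ (β + s - n)) =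
        ω * (r₀ ^ (β + s) / (β + s)) := by
      have h' := radial_int n hn (β + s - n) r₀ (by rw [sub_add_cancel]; exact hβspos) hr₀
      rw [sub_add_cancel] at h'
      rw [h', ← hωV]
    rw [I3]
    ring
end
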